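/- arXiv:math/0101031 — 2 statements merged into one kernel-verified Lean document; each statement's English description precedes it below -/
import Mathlib

section
/- For the simple symmetric random walk on ℤ, the expected range after n steps satisfies E[R_n] ≍ √n, i.e., there exist constants c, C > 0 such that c·√n ≤ E[R_n] ≤ C·√n for all n ≥ 1. -/
open MeasureTheory Finset

/-!
The range of the walk after `n` steps lies between `|S n| + 1` (a walk with unit steps visits
every site between its start and its end) and `2 max_{k ≤ n} |S k| + 1`.

For the lower bound, `E[S n ^ 2] = n` and `E[S n ^ 4] = 3 n ^ 2 - 2 n`, and integrating the
pointwise inequality `x ^ 2 ≤ a |x| + x ^ 4 / a ^ 2` at `a = 3 √n` gives `E |S n| ≥ 2 √n / 9`.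

For the upper bound, Kolmogorov's maximal inequality (Doob's inequality for the submartingale
`S k ^ 2`) gives `P(max_{k ≤ n} |S k| ≥ t) ≤ n / t ^ 2`; summing `min 1 (n / t ^ 2)` over
`t = 1, …, n` gives `E[max_{k ≤ n} |S k|] ≤ 3 √n + 1`.
-/

theorem sq_le_mul_abs_add_pow_four_div_sq {a : ℝ} (ha : 0 < a) (x : ℝ) :
    x ^ 2 ≤ a * |x| + x ^ 4 / a ^ 2 := by
  rcases le_total |x| a with h | h
  · have : 0 ≤ x ^ 4 / a ^ 2 := by positivity
    nlinarith [abs_nonneg x, sq_abs x]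
  · have hx : a ^ 2 ≤ x ^ 2 := sq_abs x ▸ pow_le_pow_left₀ ha.le h 2
    have : a ^ 2 * x ^ 2 ≤ x ^ 4 := by nlinarith [sq_nonneg x]
    have : x ^ 2 ≤ x ^ 4 / a ^ 2 := by rw [le_div_iff₀ (by positivity)]; linarith
    nlinarith [abs_nonneg x]

theorem sum_range_inv_add_sq_le (a n : ℕ) :
    ∑ t ∈ range n, (((a + 1 + t : ℕ) : ℝ) ^ 2)⁻¹ ≤ 2 / (a + 1) := by
  have h := sum_Ioo_inv_sq_le (α := ℝ) a (a + 1 + n)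
  rw [← Finset.Ico_add_one_left_eq_Ioo, Finset.sum_Ico_eq_sum_range] at h
  simpa using h

theorem sum_range_min_one_div_sq_le (n : ℕ) :
    ∑ t ∈ range n, min 1 ((n : ℝ) / (t + 1) ^ 2) ≤ 3 * √n := by
  set a := Nat.sqrt n
  set f : ℕ → ℝ := fun t => min 1 ((n : ℝ) / (t + 1) ^ 2)
  have hf : ∀ t, 0 ≤ f t := fun t => le_min zero_le_one (by positivity)
  have ha : (a : ℝ) ≤ √n := Real.nat_sqrt_le_real_sqrt
  have ha' : √n < a + 1 := Real.real_sqrt_lt_nat_sqrt_succ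
  calc ∑ t ∈ range n, f t ≤ ∑ t ∈ range (a + n), f t :=
        sum_le_sum_of_subset_of_nonneg (range_mono (by omega)) fun t _ _ => hf t
    _ = ∑ t ∈ range a, f t + ∑ t ∈ range n, f (a + t) := sum_range_add _ _ _
    _ ≤ ∑ _t ∈ range a, (1 : ℝ) + n * ∑ t ∈ range n, (((a + 1 + t : ℕ) : ℝ) ^ 2)⁻¹ := by
        rw [mul_sum]
        gcongr with t
        · exact min_le_left _ _
        · exact (min_le_right _ _).trans_eq (by push_cast; ring)
    _ ≤ a + n * (2 / (a + 1)) := by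
        simp only [sum_const, card_range, nsmul_eq_mul, mul_one]
        gcongr
        exact sum_range_inv_add_sq_le a n
    _ ≤ 3 * √n := by
        have : (n : ℝ) / (a + 1) ≤ √n := by
          rw [div_le_iff₀ (by positivity)]
          nlinarith [Real.sq_sqrt n.cast_nonneg, Real.sqrt_nonneg n]
        have h2 : (n : ℝ) * (2 / (a + 1)) = 2 * (n / (a + 1)) := by ring
        linarith

theorem le_one_add_card_filter_range {w : ℝ} {n : ℕ} (hw : w ≤ n) :
    w ≤ 1 + #{t ∈ range n | ((t : ℕ) : ℝ) + 1 ≤ w} := by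
  have hsub : range ⌊w⌋₊ ⊆ {t ∈ range n | ((t : ℕ) : ℝ) + 1 ≤ w} := by
    intro t ht
    rw [mem_range] at ht
    refine mem_filter.2 ⟨mem_range.2 (ht.trans_le (Nat.floor_le_of_le hw)), ?_⟩
    exact_mod_cast (Nat.le_floor_iff' t.succ_ne_zero).1 ht
  calc w ≤ ⌊w⌋₊ + 1 := (Nat.lt_floor_add_one w).le
    _ ≤ _ := by
      rw [add_comm]
      gcongr
      simpa using card_le_card hsub

theorem Icc_subset_image_range_of_abs_sub_le_one {f : ℕ → ℤ} {n : ℕ}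
    (hf : ∀ k < n, |f (k + 1) - f k| ≤ 1) :
    Icc (min (f 0) (f n)) (max (f 0) (f n)) ⊆ (range (n + 1)).image f := by
  induction n with
  | zero => intro z hz; simp_all
  | succ n ih =>
    intro z hz
    by_cases hzn : z = f (n + 1)
    · exact mem_image.2 ⟨n + 1, by simp, hzn.symm⟩
    have hstep := hf n n.lt_succ_self
    have hz' : z ∈ Icc (min (f 0) (f n)) (max (f 0) (f n)) := by
      simp only [mem_Icc, min_le_iff, le_max_iff] at hz ⊢
      rw [abs_le] at hstep
      omega
    exact image_subset_image (range_mono (by omega)) (ih (fun k hk => hf k (by omega)) hz')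

theorem card_le_two_mul_add_one_of_abs_le {s : Finset ℤ} {r : ℝ} (hr : 0 ≤ r)
    (hs : ∀ z ∈ s, |(z : ℝ)| ≤ r) : (#s : ℝ) ≤ 2 * r + 1 := by
  have hsub : s ⊆ Icc (-⌊r⌋) ⌊r⌋ := fun z hz => by
    have h := abs_le.1 (hs z hz)
    rw [mem_Icc, neg_le, Int.le_floor, Int.le_floor]
    push_cast
    constructor <;> linarith
  have hcard := card_le_card hsub
  rw [Int.card_Icc] at hcard
  have hr' : (0 : ℤ) ≤ ⌊r⌋ := Int.floor_nonneg.2 hr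
  have hcardℤ : (#s : ℤ) ≤ 2 * ⌊r⌋ + 1 := by omega
  have hcardℝ : (#s : ℝ) ≤ 2 * ⌊r⌋ + 1 := by exact_mod_cast hcardℤ
  linarith [Int.floor_le r]

theorem measurable_comp_of_dependsOn {Ω ι α β : Type*} [MeasurableSpace Ω] [MeasurableSpace α]
    [Countable α] [MeasurableSingletonClass α] [MeasurableSpace β] [Nonempty β]
    {Z : ι → Ω → α} (hZ : ∀ i, Measurable (Z i)) {G : (ι → α) → β} {s : Finset ι}
    (hG : DependsOn G s) : Measurable fun ω => G fun i => Z i ω := by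
  obtain ⟨g, rfl⟩ := dependsOn_iff_exists_comp.1 hG
  exact (measurable_of_countable g).comp (measurable_pi_lambda _ fun i => hZ i)

def walkRange (x : ℕ → ℤ) (n : ℕ) : ℕ :=
  #((range (n + 1)).image fun j => ∑ k ∈ range j, x k)

theorem abs_sum_add_one_le_walkRange {x : ℕ → ℤ} {n : ℕ} (hx : ∀ k < n, |x k| ≤ 1) :
    |∑ k ∈ range n, x k| + 1 ≤ walkRange x n := by
  have h := card_le_card (Icc_subset_image_range_of_abs_sub_le_one
    (f := fun j => ∑ k ∈ range j, x k) fun k hk => by simpa [sum_range_succ] using hx k hk)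
  rw [Int.card_Icc] at h
  simp only [range_zero, sum_empty] at h
  rw [walkRange, abs_eq_max_neg]
  omega

theorem walkRange_le_add_one (x : ℕ → ℤ) (n : ℕ) : walkRange x n ≤ n + 1 :=
  card_image_le.trans (card_range _).le

theorem walkRange_le_two_mul_sup'_add_one (x : ℕ → ℤ) (n : ℕ) :
    (walkRange x n : ℝ) ≤ 2 * (range (n + 1)).sup' nonempty_range_add_one
      (fun j => |∑ k ∈ range j, (x k : ℝ)|) + 1 := by
  refine card_le_two_mul_add_one_of_abs_le
    ((abs_nonneg _).trans (le_sup' (fun j => |∑ k ∈ range j, (x k : ℝ)|) (self_mem_range_succ n)))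
    fun z hz => ?_
  obtain ⟨j, hj, rfl⟩ := mem_image.1 hz
  exact_mod_cast le_sup' (fun j => |∑ k ∈ range j, (x k : ℝ)|) hj

theorem measurable_walkRange {Ω : Type*} [MeasurableSpace Ω] {X : ℕ → Ω → ℤ}
    (hX : ∀ k, Measurable (X k)) (n : ℕ) :
    Measurable fun ω => (walkRange (fun k => X k ω) n : ℝ) := by
  refine measurable_comp_of_dependsOn hX (G := fun x => (walkRange x n : ℝ)) (s := range n)
    fun x y hxy => ?_
  simp only [walkRange]
  congr 2
  refine image_congr fun j hj => sum_congr rfl fun k hk => hxy k ?_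
  simp only [coe_range, Set.mem_Iio, mem_range] at hj hk ⊢
  omega

namespace MeasureTheory

variable {Ω : Type*} {m0 : MeasurableSpace Ω} {μ : Measure Ω}

theorem Martingale.submartingale_sq [IsFiniteMeasure μ] {ℱ : Filtration ℕ m0}
    {f : ℕ → Ω → ℝ} (hf : Martingale f ℱ μ) (hL2 : ∀ i, MemLp (f i) 2 μ) :
    Submartingale (fun i ω => f i ω ^ 2) ℱ μ := by
  refine submartingale_nat (fun i => (hf.stronglyAdapted i).pow 2)
    (fun i => (hL2 i).integrable_sq) fun i => ?_
  have hcross : Integrable (f i * f (i + 1)) μ := (hL2 i).integrable_mul (hL2 (i + 1))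
  have hinc : Integrable (fun ω => (f (i + 1) ω - f i ω) ^ 2) μ :=
    ((hL2 (i + 1)).sub (hL2 i)).integrable_sq
  -- Given `ℱ i`, the cross term `f i * f (i + 1)` averages to `f i ^ 2`; the last square is `≥ 0`.
  have hdecomp : (fun ω => f (i + 1) ω ^ 2) =
      (2 : ℝ) • (f i * f (i + 1)) - (fun ω => f i ω ^ 2) + fun ω => (f (i + 1) ω - f i ω) ^ 2 := by
    ext ω; simp only [Pi.add_apply, Pi.sub_apply, Pi.smul_apply, Pi.mul_apply, smul_eq_mul]; ring
  have hcross_condExp : μ[f i * f (i + 1) | ℱ i] =ᵐ[μ] f i * f i :=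
    (condExp_mul_of_stronglyMeasurable_left (hf.stronglyMeasurable i) hcross
      (hf.integrable _)).trans
      ((hf.condExp_ae_eq i.le_succ).mono fun ω h => by simp [h])
  have hsq_condExp : μ[fun ω => f i ω ^ 2 | ℱ i] = fun ω => f i ω ^ 2 :=
    condExp_of_stronglyMeasurable (ℱ.le i) ((hf.stronglyMeasurable i).pow 2) (hL2 i).integrable_sq
  have hinc_condExp : 0 ≤ᵐ[μ] μ[fun ω => (f (i + 1) ω - f i ω) ^ 2 | ℱ i] :=
    condExp_nonneg (ae_of_all _ fun ω => sq_nonneg _)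
  rw [hdecomp]
  filter_upwards [condExp_add ((hcross.smul (2 : ℝ)).sub (hL2 i).integrable_sq) hinc (ℱ i),
    condExp_sub (hcross.smul (2 : ℝ)) (hL2 i).integrable_sq (ℱ i),
    condExp_smul (2 : ℝ) (f i * f (i + 1)) (ℱ i),
    hcross_condExp, hinc_condExp] with ω h₁ h₂ h₃ h₄ h₅
  simp only [Pi.add_apply, Pi.sub_apply, Pi.smul_apply, Pi.mul_apply, smul_eq_mul,
    Pi.zero_apply] at h₁ h₂ h₃ h₄ h₅ ⊢
  rw [hsq_condExp] at h₂
  nlinarith [h₁, h₂, h₃, h₄, h₅]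

theorem integral_le_one_add_sum_measureReal [IsProbabilityMeasure μ] {W : Ω → ℝ}
    (hW : Measurable W) (h0 : 0 ≤ᵐ[μ] W) {n : ℕ} (hle : ∀ᵐ ω ∂μ, W ω ≤ n) :
    ∫ ω, W ω ∂μ ≤ 1 + ∑ t ∈ range n, μ.real {ω | (t : ℝ) + 1 ≤ W ω} := by
  have hmeas : ∀ t : ℕ, MeasurableSet {ω | (t : ℝ) + 1 ≤ W ω} :=
    fun t => measurableSet_le measurable_const hW
  have hint : ∀ t ∈ range n, Integrable ({ω | (t : ℝ) + 1 ≤ W ω}.indicator (1 : Ω → ℝ)) μ :=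
    fun t _ => (integrable_const (1 : ℝ)).indicator (hmeas t)
  calc ∫ ω, W ω ∂μ
      ≤ ∫ ω, (1 + ∑ t ∈ range n, {ω | (t : ℝ) + 1 ≤ W ω}.indicator (1 : Ω → ℝ) ω) ∂μ := by
        refine integral_mono_of_nonneg h0 ((integrable_const (1 : ℝ)).add
          (integrable_finsetSum _ hint)) ?_
        filter_upwards [hle] with ω h
        simpa [Set.indicator_apply, sum_boole] using le_one_add_card_filter_range h
    _ = _ := by
        rw [integral_add (integrable_const (1 : ℝ)) (integrable_finsetSum _ hint),
          integral_finsetSum _ hint]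
        simp [integral_indicator_one (hmeas _)]

end MeasureTheory

namespace ProbabilityTheory

variable {Ω : Type*} {m0 : MeasurableSpace Ω} {μ : Measure Ω} {Y : ℕ → Ω → ℝ}

theorem martingale_partialSum (hY : ∀ k, StronglyMeasurable (Y k)) (hindep : iIndepFun Y μ)
    (hint : ∀ k, Integrable (Y k) μ) (hmean : ∀ k, μ[Y k] = 0) :
    Martingale (fun k => ∑ i ∈ range (k + 1), Y i) (Filtration.natural Y hY) μ := by
  have := hindep.isProbabilityMeasure
  have hadapted : StronglyAdapted (Filtration.natural Y hY) fun k => ∑ i ∈ range (k + 1), Y i :=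
    fun k => stronglyMeasurable_sum _ fun i hi =>
      (Filtration.stronglyAdapted_natural hY i).mono
        (Filtration.mono _ (Nat.lt_succ_iff.1 (mem_range.1 hi)))
  have hsum_int : ∀ k, Integrable (∑ i ∈ range (k + 1), Y i) μ :=
    fun k => integrable_finsetSum' _ fun i _ => hint i
  refine martingale_nat hadapted hsum_int fun k => ?_
  rw [sum_range_succ _ (k + 1)]
  filter_upwards [condExp_add (hsum_int k) (hint (k + 1)) _,
    hindep.condExp_natural_ae_eq_of_lt hY k.lt_succ_self] with ω h₁ h₂
  rw [h₁, Pi.add_apply, h₂, hmean, add_zero,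
    condExp_of_stronglyMeasurable (Filtration.le _ k) (hadapted k) (hsum_int k)]

theorem kolmogorov_maximal_ineq (hY : ∀ k, StronglyMeasurable (Y k)) (hindep : iIndepFun Y μ)
    (hL2 : ∀ k, MemLp (Y k) 2 μ) (hmean : ∀ k, μ[Y k] = 0) {ε : ℝ} (hε : 0 < ε) (n : ℕ) :
    μ.real {ω | ∃ k ≤ n, ε ≤ |∑ i ∈ range k, Y i ω|} ≤
      (∫ ω, (∑ i ∈ range n, Y i ω) ^ 2 ∂μ) / ε ^ 2 := by
  have := hindep.isProbabilityMeasure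
  rcases n with _ | m
  · simp [hε.not_ge]
  set f : ℕ → Ω → ℝ := fun j ω => (∑ i ∈ range (j + 1), Y i ω) ^ 2
  have hsub : Submartingale f (Filtration.natural Y hY) μ := by
    simpa [f, Finset.sum_apply] using
      (martingale_partialSum hY hindep (fun k => (hL2 k).integrable one_le_two)
        hmean).submartingale_sq fun k => memLp_finsetSum' _ fun i _ => hL2 i
  have hf_int : Integrable (f m) μ := hsub.integrable m
  set E := {ω | ((⟨ε ^ 2, by positivity⟩ : NNReal) : ℝ) ≤
    (range (m + 1)).sup' nonempty_range_add_one fun j => f j ω}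
  have hsubset : {ω | ∃ k ≤ m + 1, ε ≤ |∑ i ∈ range k, Y i ω|} ⊆ E := by
    rintro ω ⟨_ | j, hj, hle⟩
    · simp only [range_zero, sum_empty, abs_zero] at hle
      linarith
    simp only [E, Set.mem_ofPred_eq, le_sup'_iff, mem_range]
    refine ⟨j, by omega, ?_⟩
    simpa [f, sq_abs] using pow_le_pow_left₀ hε.le hle 2
  have hE : ε ^ 2 * μ.real E ≤ ∫ ω, f m ω ∂μ := by
    have h := ENNReal.toReal_mono ENNReal.ofReal_ne_top
      (maximal_ineq hsub (fun j ω => sq_nonneg _) (ε := ⟨ε ^ 2, by positivity⟩) m)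
    rw [ENNReal.toReal_mul, ENNReal.toReal_ofReal (setIntegral_nonneg_of_ae ?_)] at h
    · exact h.trans (setIntegral_le_integral hf_int (ae_of_all _ fun ω => sq_nonneg _))
    · exact ae_of_all _ fun ω => sq_nonneg _
  rw [le_div_iff₀ (by positivity)]
  calc μ.real {ω | ∃ k ≤ m + 1, ε ≤ |∑ i ∈ range k, Y i ω|} * ε ^ 2
      ≤ μ.real E * ε ^ 2 := by gcongr; exact measure_ne_top _ _
    _ ≤ ∫ ω, f m ω ∂μ := by linarith

-- `Y k ^ 2 = 1` and `E[Y k] = 0` say exactly that `Y k = ±1` with probability `1 / 2` each.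
structure IsRademacherSeq (Y : ℕ → Ω → ℝ) (μ : Measure Ω) : Prop where
  measurable : ∀ k, Measurable (Y k)
  iIndepFun : iIndepFun Y μ
  sq_eq_one : ∀ k, ∀ᵐ ω ∂μ, Y k ω ^ 2 = 1
  integral_eq_zero : ∀ k, μ[Y k] = 0

namespace IsRademacherSeq

variable {Y : ℕ → Ω → ℝ}

theorem isProbabilityMeasure (hY : IsRademacherSeq Y μ) : IsProbabilityMeasure μ :=
  hY.iIndepFun.isProbabilityMeasure

theorem ae_abs_le_one (hY : IsRademacherSeq Y μ) (k : ℕ) : ∀ᵐ ω ∂μ, |Y k ω| ≤ 1 :=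
  (hY.sq_eq_one k).mono fun _ h => (sq_le_one_iff_abs_le_one _).1 h.le

theorem ae_abs_partialSum_le (hY : IsRademacherSeq Y μ) (n : ℕ) :
    ∀ᵐ ω ∂μ, |∑ i ∈ range n, Y i ω| ≤ n := by
  filter_upwards [ae_all_iff.2 hY.ae_abs_le_one] with ω h
  calc |∑ i ∈ range n, Y i ω| ≤ ∑ i ∈ range n, |Y i ω| := abs_sum_le_sum_abs _ _
    _ ≤ ∑ _i ∈ range n, (1 : ℝ) := sum_le_sum fun i _ => h i
    _ = n := by simp

theorem measurable_partialSum (hY : IsRademacherSeq Y μ) (n : ℕ) :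
    Measurable fun ω => ∑ i ∈ range n, Y i ω :=
  Finset.measurable_sum _ fun i _ => hY.measurable i

theorem integral_comp_partialSum_mul (hY : IsRademacherSeq Y μ) {φ : ℝ → ℝ} (hφ : Measurable φ)
    (n : ℕ) : ∫ ω, φ (∑ i ∈ range n, Y i ω) * Y n ω ∂μ = 0 := by
  have hindep : IndepFun (fun ω => φ (∑ i ∈ range n, Y i ω)) (Y n) μ := by
    simpa [Function.comp_def, Finset.sum_apply] using
      (hY.iIndepFun.indepFun_finsetSum_of_notMem hY.measurable notMem_range_self).comp hφ
        measurable_id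
  simpa [hY.integral_eq_zero n] using hindep.integral_mul_eq_mul_integral
    (hφ.comp (hY.measurable_partialSum n)).aestronglyMeasurable
    (hY.measurable n).aestronglyMeasurable

theorem memLp (hY : IsRademacherSeq Y μ) (k : ℕ) (p : ENNReal) : MemLp (Y k) p μ :=
  have := hY.isProbabilityMeasure
  .of_bound (hY.measurable k).aestronglyMeasurable 1 (hY.ae_abs_le_one k)

theorem integrable_comp_partialSum (hY : IsRademacherSeq Y μ) {φ : ℝ → ℝ} (hφ : Continuous φ)
    (n : ℕ) : Integrable (fun ω => φ (∑ i ∈ range n, Y i ω)) μ := by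
  have := hY.isProbabilityMeasure
  obtain ⟨C, hC⟩ := (isCompact_Icc (a := -(n : ℝ)) (b := n)).exists_bound_of_continuousOn
    hφ.continuousOn
  refine .of_bound (hφ.measurable.comp (hY.measurable_partialSum n)).aestronglyMeasurable C ?_
  filter_upwards [hY.ae_abs_partialSum_le n] with ω h
  exact hC _ (abs_le.1 h)

-- For `y = ±1`, `φ (s + y) = (φ (s + 1) + φ (s - 1)) / 2 + y * (φ (s + 1) - φ (s - 1)) / 2`.
theorem integral_comp_partialSum_succ (hY : IsRademacherSeq Y μ) {φ : ℝ → ℝ} (hφ : Continuous φ)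
    (n : ℕ) : ∫ ω, φ (∑ i ∈ range (n + 1), Y i ω) ∂μ =
      ∫ ω, (φ (∑ i ∈ range n, Y i ω + 1) + φ (∑ i ∈ range n, Y i ω - 1)) / 2 ∂μ := by
  set ψ : ℝ → ℝ := fun s => (φ (s + 1) - φ (s - 1)) / 2
  have hψ : Continuous ψ := by fun_prop
  have hstep : (fun ω => φ (∑ i ∈ range (n + 1), Y i ω)) =ᵐ[μ] fun ω =>
      (φ (∑ i ∈ range n, Y i ω + 1) + φ (∑ i ∈ range n, Y i ω - 1)) / 2 +
        ψ (∑ i ∈ range n, Y i ω) * Y n ω := by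
    filter_upwards [hY.sq_eq_one n] with ω h
    rcases sq_eq_one_iff.1 h with h | h <;>
      simp only [ψ, sum_range_succ, h, sub_eq_add_neg, mul_neg, mul_one] <;> ring
  rw [integral_congr_ae hstep, integral_add, hY.integral_comp_partialSum_mul hψ.measurable,
    add_zero]
  · exact hY.integrable_comp_partialSum (φ := fun s => (φ (s + 1) + φ (s - 1)) / 2) (by fun_prop) n
  · exact (hY.integrable_comp_partialSum hψ n).mul_bdd (hY.measurable n).aestronglyMeasurable
      (hY.ae_abs_le_one n)

theorem integral_partialSum_sq (hY : IsRademacherSeq Y μ) (n : ℕ) :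
    ∫ ω, (∑ i ∈ range n, Y i ω) ^ 2 ∂μ = n := by
  have := hY.isProbabilityMeasure
  induction n with
  | zero => simp
  | succ n ih =>
    rw [hY.integral_comp_partialSum_succ (φ := fun s => s ^ 2) (by fun_prop)]
    calc ∫ ω, ((∑ i ∈ range n, Y i ω + 1) ^ 2 + (∑ i ∈ range n, Y i ω - 1) ^ 2) / 2 ∂μ
        = ∫ ω, ((∑ i ∈ range n, Y i ω) ^ 2 + 1) ∂μ := by congr with ω; ring
      _ = (n : ℝ) + 1 := by
        rw [integral_add (hY.integrable_comp_partialSum (continuous_pow 2) n) (integrable_const _),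
          ih, integral_const, probReal_univ, one_smul]
      _ = _ := by push_cast; ring

theorem integral_partialSum_pow_four (hY : IsRademacherSeq Y μ) (n : ℕ) :
    ∫ ω, (∑ i ∈ range n, Y i ω) ^ 4 ∂μ = 3 * n ^ 2 - 2 * n := by
  have := hY.isProbabilityMeasure
  induction n with
  | zero => simp
  | succ n ih =>
    rw [hY.integral_comp_partialSum_succ (φ := fun s => s ^ 4) (by fun_prop)]
    calc ∫ ω, ((∑ i ∈ range n, Y i ω + 1) ^ 4 + (∑ i ∈ range n, Y i ω - 1) ^ 4) / 2 ∂μ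
        = ∫ ω, ((∑ i ∈ range n, Y i ω) ^ 4 + (6 * (∑ i ∈ range n, Y i ω) ^ 2 + 1)) ∂μ := by
          congr with ω; ring
      _ = 3 * (n : ℝ) ^ 2 - 2 * n + (6 * n + 1) := by
        have h2 : Integrable (fun ω => 6 * (∑ i ∈ range n, Y i ω) ^ 2) μ :=
          (hY.integrable_comp_partialSum (continuous_pow 2) n).const_mul 6
        have h21 : Integrable (fun ω => 6 * (∑ i ∈ range n, Y i ω) ^ 2 + 1) μ :=
          h2.add (integrable_const 1)
        rw [integral_add (hY.integrable_comp_partialSum (continuous_pow 4) n) h21,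
          integral_add h2 (integrable_const 1), integral_const_mul, hY.integral_partialSum_sq, ih,
          integral_const, probReal_univ, one_smul]
      _ = _ := by push_cast; ring

theorem integral_abs_partialSum_ge (hY : IsRademacherSeq Y μ) (n : ℕ) :
    2 / 9 * √n ≤ ∫ ω, |∑ i ∈ range n, Y i ω| ∂μ := by
  rcases n.eq_zero_or_pos with rfl | hn
  · simp
  have hs : 0 < √(n : ℝ) := Real.sqrt_pos.2 (by exact_mod_cast hn)
  have hsq : √(n : ℝ) ^ 2 = n := Real.sq_sqrt n.cast_nonneg
  set a := 3 * √(n : ℝ)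
  have ha : 0 < a := by positivity
  have habs := hY.integrable_comp_partialSum continuous_abs n
  have h4 := hY.integrable_comp_partialSum (continuous_pow 4) n
  have hmoment : (n : ℝ) ≤ a * ∫ ω, |∑ i ∈ range n, Y i ω| ∂μ + (3 * n ^ 2 - 2 * n) / a ^ 2 := by
    have h := integral_mono (hY.integrable_comp_partialSum (continuous_pow 2) n)
      ((habs.const_mul a).add (h4.div_const (a ^ 2))) fun ω =>
        sq_le_mul_abs_add_pow_four_div_sq ha (∑ i ∈ range n, Y i ω)
    simp only [Pi.add_apply] at h
    rwa [integral_add (habs.const_mul a) (h4.div_const _), integral_const_mul, integral_div,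
      hY.integral_partialSum_sq, hY.integral_partialSum_pow_four] at h
  have hrem : (3 * n ^ 2 - 2 * n) / a ^ 2 ≤ (n : ℝ) / 3 := by
    rw [div_le_iff₀ (by positivity)]
    nlinarith
  nlinarith

theorem measurable_sup'_abs_partialSum (hY : IsRademacherSeq Y μ) (n : ℕ) :
    Measurable fun ω => (range (n + 1)).sup' nonempty_range_add_one
      fun k => |∑ i ∈ range k, Y i ω| :=
  Finset.measurable_range_sup'' fun k _ => (hY.measurable_partialSum k).abs

theorem ae_sup'_abs_partialSum_le (hY : IsRademacherSeq Y μ) (n : ℕ) :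
    ∀ᵐ ω ∂μ, (range (n + 1)).sup' nonempty_range_add_one
      (fun k => |∑ i ∈ range k, Y i ω|) ≤ n := by
  filter_upwards [ae_all_iff.2 hY.ae_abs_partialSum_le] with ω h
  exact sup'_le _ _ fun k hk => (h k).trans (by exact_mod_cast Nat.lt_succ_iff.1 (mem_range.1 hk))

theorem integrable_sup'_abs_partialSum (hY : IsRademacherSeq Y μ) (n : ℕ) :
    Integrable (fun ω => (range (n + 1)).sup' nonempty_range_add_one
      fun k => |∑ i ∈ range k, Y i ω|) μ := by
  have := hY.isProbabilityMeasure
  refine .of_bound (hY.measurable_sup'_abs_partialSum n).aestronglyMeasurable n ?_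
  filter_upwards [hY.ae_sup'_abs_partialSum_le n] with ω h
  rwa [Real.norm_eq_abs, abs_of_nonneg ((abs_nonneg _).trans
    (le_sup' (fun k => |∑ i ∈ range k, Y i ω|) (self_mem_range_succ n)))]

theorem integral_sup'_abs_partialSum_le (hY : IsRademacherSeq Y μ) (n : ℕ) :
    ∫ ω, (range (n + 1)).sup' nonempty_range_add_one (fun k => |∑ i ∈ range k, Y i ω|) ∂μ ≤
      3 * √n + 1 := by
  have := hY.isProbabilityMeasure
  have htail : ∀ t : ℕ, μ.real {ω | (t : ℝ) + 1 ≤ (range (n + 1)).sup' nonempty_range_add_one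
      (fun k => |∑ i ∈ range k, Y i ω|)} ≤ min 1 ((n : ℝ) / (t + 1) ^ 2) := by
    intro t
    refine le_min measureReal_le_one ?_
    have h := kolmogorov_maximal_ineq (fun k => (hY.measurable k).stronglyMeasurable) hY.iIndepFun
      (fun k => hY.memLp k 2) hY.integral_eq_zero (ε := t + 1) (by positivity) n
    rw [hY.integral_partialSum_sq] at h
    have hset : {ω | (t : ℝ) + 1 ≤ (range (n + 1)).sup' nonempty_range_add_one
        (fun k => |∑ i ∈ range k, Y i ω|)} =
        {ω | ∃ k ≤ n, (t : ℝ) + 1 ≤ |∑ i ∈ range k, Y i ω|} := by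
      ext ω
      simp [le_sup'_iff]
    rwa [hset]
  calc _ ≤ 1 + ∑ t ∈ range n, μ.real {ω | (t : ℝ) + 1 ≤ (range (n + 1)).sup'
        nonempty_range_add_one (fun k => |∑ i ∈ range k, Y i ω|)} :=
        integral_le_one_add_sum_measureReal (hY.measurable_sup'_abs_partialSum n)
          (ae_of_all _ fun ω => (abs_nonneg _).trans
            (le_sup' (fun k => |∑ i ∈ range k, Y i ω|) (mem_range.2 n.lt_succ_self)))
          (hY.ae_sup'_abs_partialSum_le n)
    _ ≤ 1 + 3 * √n := by
        gcongr
        exact (sum_le_sum fun t _ => htail t).trans (sum_range_min_one_div_sq_le n)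
    _ = 3 * √n + 1 := add_comm _ _

end IsRademacherSeq

theorem ae_eq_one_or_eq_neg_one [IsProbabilityMeasure μ] {Z : Ω → ℤ} (hZ : Measurable Z)
    (hdist : μ {ω | Z ω = 1} = 1 / 2 ∧ μ {ω | Z ω = -1} = 1 / 2) :
    ∀ᵐ ω ∂μ, Z ω = 1 ∨ Z ω = -1 := by
  have hdisj : Disjoint {ω | Z ω = 1} {ω | Z ω = -1} :=
    Set.disjoint_left.2 fun ω h₁ h₂ => by simp_all
  have hmeas : MeasurableSet ({ω | Z ω = 1} ∪ {ω | Z ω = -1}) :=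
    (hZ (measurableSet_singleton 1)).union (hZ (measurableSet_singleton (-1)))
  have hfull : μ ({ω | Z ω = 1} ∪ {ω | Z ω = -1}) = μ Set.univ := by
    rw [measure_union hdisj (hZ (measurableSet_singleton _)), hdist.1, hdist.2,
      ENNReal.add_halves, measure_univ]
  exact (ae_iff_measure_eq hmeas.nullMeasurableSet).2 hfull

theorem integral_intCast_eq_zero [IsProbabilityMeasure μ] {Z : Ω → ℤ} (hZ : Measurable Z)
    (hdist : μ {ω | Z ω = 1} = 1 / 2 ∧ μ {ω | Z ω = -1} = 1 / 2) :
    ∫ ω, (Z ω : ℝ) ∂μ = 0 := by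
  have h₁ : MeasurableSet {ω | Z ω = 1} := hZ (measurableSet_singleton 1)
  have h₂ : MeasurableSet {ω | Z ω = -1} := hZ (measurableSet_singleton (-1))
  have hZ' : (fun ω => (Z ω : ℝ)) =ᵐ[μ]
      fun ω => {ω | Z ω = 1}.indicator 1 ω - {ω | Z ω = -1}.indicator 1 ω := by
    filter_upwards [ae_eq_one_or_eq_neg_one hZ hdist] with ω h
    rcases h with h | h <;> simp [h]
  rw [integral_congr_ae hZ', integral_sub ((integrable_const 1).indicator h₁)
    ((integrable_const 1).indicator h₂), integral_indicator_one h₁, integral_indicator_one h₂,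
    measureReal_def, measureReal_def, hdist.1, hdist.2, sub_self]

theorem isRademacherSeq_intCast [IsProbabilityMeasure μ] {X : ℕ → Ω → ℤ}
    (hX : ∀ k, Measurable (X k)) (hindep : iIndepFun X μ)
    (hdist : ∀ k, μ {ω | X k ω = 1} = 1 / 2 ∧ μ {ω | X k ω = -1} = 1 / 2) :
    IsRademacherSeq (fun k ω => (X k ω : ℝ)) μ where
  measurable k := (measurable_of_countable _).comp (hX k)
  iIndepFun := hindep.comp _ fun _ => measurable_of_countable _
  sq_eq_one k := by
    filter_upwards [ae_eq_one_or_eq_neg_one (hX k) (hdist k)] with ω h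
    rcases h with h | h <;> simp [h]
  integral_eq_zero k := integral_intCast_eq_zero (hX k) (hdist k)

end ProbabilityTheory

section

open ProbabilityTheory

variable {Ω : Type*} {m0 : MeasurableSpace Ω} {μ : Measure Ω} {X : ℕ → Ω → ℤ}

theorem integrable_walkRange [IsFiniteMeasure μ] (hX : ∀ k, Measurable (X k)) (n : ℕ) :
    Integrable (fun ω => (walkRange (fun k => X k ω) n : ℝ)) μ :=
  .of_bound (measurable_walkRange hX n).aestronglyMeasurable (n + 1) <| ae_of_all _ fun ω => by
    simpa using (Nat.cast_le (α := ℝ)).2 (walkRange_le_add_one (fun k => X k ω) n)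

theorem integral_walkRange_ge (hX : ∀ k, Measurable (X k))
    (hY : IsRademacherSeq (fun k ω => (X k ω : ℝ)) μ) (n : ℕ) :
    2 / 9 * √n ≤ ∫ ω, (walkRange (fun k => X k ω) n : ℝ) ∂μ := by
  have := hY.isProbabilityMeasure
  refine (hY.integral_abs_partialSum_ge n).trans (integral_mono_ae
    (hY.integrable_comp_partialSum continuous_abs n) (integrable_walkRange hX n) ?_)
  filter_upwards [ae_all_iff.2 hY.ae_abs_le_one] with ω h
  have hwalk : |∑ k ∈ range n, (X k ω : ℝ)| + 1 ≤ walkRange (fun k => X k ω) n := by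
    exact_mod_cast abs_sum_add_one_le_walkRange fun k _ => by exact_mod_cast h k
  linarith

theorem integral_walkRange_le (hX : ∀ k, Measurable (X k))
    (hY : IsRademacherSeq (fun k ω => (X k ω : ℝ)) μ) (n : ℕ) :
    ∫ ω, (walkRange (fun k => X k ω) n : ℝ) ∂μ ≤ 6 * √n + 3 := by
  have := hY.isProbabilityMeasure
  have hint := (hY.integrable_sup'_abs_partialSum n).const_mul 2
  calc ∫ ω, (walkRange (fun k => X k ω) n : ℝ) ∂μ
      ≤ ∫ ω, (2 * (range (n + 1)).sup' nonempty_range_add_one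
          (fun j => |∑ k ∈ range j, (X k ω : ℝ)|) + 1) ∂μ :=
        integral_mono (integrable_walkRange hX n) (hint.add (integrable_const 1))
          fun ω => walkRange_le_two_mul_sup'_add_one _ n
    _ ≤ 2 * (3 * √n + 1) + 1 := by
        rw [integral_add hint (integrable_const 1), integral_const_mul, integral_const,
          probReal_univ, one_smul]
        gcongr
        exact hY.integral_sup'_abs_partialSum_le n
    _ = 6 * √n + 3 := by ring

end

/-- For the simple symmetric random walk on ℤ (steps i.i.d. uniform on `{-1, 1}`),
the expected range `E[R n]` (number of distinct sites visited among times `0,…,n`,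
including the starting point) satisfies `E[R n] ≍ √n`. -/
theorem expected_range_asymp_sqrt {Ω : Type*} [MeasurableSpace Ω]
    (ℙ : Measure Ω) [IsProbabilityMeasure ℙ]
    (X : ℕ → Ω → ℤ) (hmeas : ∀ k, Measurable (X k))
    (hindep : ProbabilityTheory.iIndepFun X ℙ)
    (hdist : ∀ k, ℙ {ω | X k ω = 1} = 1 / 2 ∧ ℙ {ω | X k ω = -1} = 1 / 2)
    (S : ℕ → Ω → ℤ) (hS : ∀ n ω, S n ω = ∑ k ∈ range n, X k ω)
    (R : ℕ → Ω → ℕ) (hR : ∀ n ω, R n ω = ((range (n + 1)).image (fun k => S k ω)).card) :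
    ∃ c C : ℝ, 0 < c ∧ 0 < C ∧ ∀ n : ℕ, 1 ≤ n →
      c * Real.sqrt n ≤ ∫ ω, (R n ω : ℝ) ∂ℙ ∧ (∫ ω, (R n ω : ℝ) ∂ℙ) ≤ C * Real.sqrt n := by
  have hY := ProbabilityTheory.isRademacherSeq_intCast hmeas hindep hdist
  have hRX : ∀ n ω, R n ω = walkRange (fun k => X k ω) n := by simp [hR, hS, walkRange]
  refine ⟨2 / 9, 9, by norm_num, by norm_num, fun n hn => ?_⟩
  simp only [hRX]
  have hsqrt : 1 ≤ √(n : ℝ) := Real.one_le_sqrt.2 (by exact_mod_cast hn)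
  exact ⟨integral_walkRange_ge hmeas hY n, (integral_walkRange_le hmeas hY n).trans (by linarith)⟩
end

section
/- Let 0 < α < 1, C > 0, and n ≥ 1 with C√n ≤ n. If (b_i) is a finitely supported family of nonnegative reals with ∑_i b_i = n and max_i b_i ≤ C√n, then ∑_i b_i^α ≥ ⌊n/(C√n)⌋ · (C√n)^α. In particular there is a constant K > 0 depending only on C and α such that ∑_i b_i^α ≥ K · n^{(1+α)/2}. -/
/-- Lower bound from the proof of Proposition 1: if a finitely supported family of
nonnegative reals has sum `n` and each term is at most `C * √n`, then the sum of
`α`-th powers is at least `⌊n / (C√n)⌋ * (C√n) ^ α`, hence at least `K * n ^ ((1+α)/2)`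
for a constant `K > 0` depending only on `C` and `α`. -/
theorem sum_rpow_ge_of_le_cap {ι : Type*} (α : ℝ) (hα0 : 0 < α) (hα1 : α < 1)
    (C : ℝ) (hC : 0 < C) :
    ∃ K : ℝ, 0 < K ∧
      ∀ (n : ℕ), 1 ≤ n → C * Real.sqrt n ≤ n →
        ∀ (b : ι → ℝ), (∀ i, 0 ≤ b i) → (Function.support b).Finite →
          (∑ᶠ i, b i = (n : ℝ)) → (∀ i, b i ≤ C * Real.sqrt n) →
          ((⌊(n : ℝ) / (C * Real.sqrt n)⌋ : ℝ) * (C * Real.sqrt n) ^ α ≤ ∑ᶠ i, (b i) ^ α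
            ∧ K * (n : ℝ) ^ ((1 + α) / 2) ≤ ∑ᶠ i, (b i) ^ α) := by
  refine ⟨C ^ (α - 1) / 2, by positivity, ?_⟩
  intro n hn hCn b hb0 hbfin hsum hble
  set M := C * Real.sqrt n with hM
  have hn0 : (0:ℝ) < n := by exact_mod_cast hn
  have hsq : (0:ℝ) < Real.sqrt n := Real.sqrt_pos.mpr hn0
  have hM0 : 0 < M := by positivity
  -- pointwise bound
  have hpt : ∀ i, b i * M ^ (α - 1) ≤ b i ^ α := by
    intro i
    rcases eq_or_lt_of_le (hb0 i) with h | h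
    · simp [← h, Real.zero_rpow (ne_of_gt hα0)]
    · have h1 : M ^ (α - 1) ≤ (b i) ^ (α - 1) := by
        have key : b i / M ≤ (b i / M) ^ α := by
          have h2 := Real.rpow_le_rpow_of_exponent_ge (div_pos h hM0)
            ((div_le_one hM0).mpr (hble i)) hα1.le
          simpa using h2
        rw [Real.div_rpow (hb0 i) hM0.le,
          div_le_div_iff₀ hM0 (Real.rpow_pos_of_pos hM0 α)] at key
        rw [Real.rpow_sub hM0, Real.rpow_sub h, Real.rpow_one, Real.rpow_one,
          div_le_div_iff₀ hM0 h]
        linarith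
      calc b i * M ^ (α - 1) ≤ b i * (b i) ^ (α - 1) :=
            mul_le_mul_of_nonneg_left h1 h.le
        _ = (b i) ^ α := by
            rw [← Real.rpow_one_add' h.le (by linarith)]; ring_nf
  -- convert finsums to finset sums
  have hsub : Function.support (fun i => (b i) ^ α) ⊆ ↑hbfin.toFinset := by
    intro i hi
    simp only [Function.mem_support] at hi
    simp only [Set.Finite.coe_toFinset, Function.mem_support]
    intro hbi
    exact hi (by simp [hbi, Real.zero_rpow (ne_of_gt hα0)])
  have hA : ∑ᶠ i, (b i) ^ α = ∑ i ∈ hbfin.toFinset, (b i) ^ α :=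
    finsum_eq_finset_sum_of_support_subset _ hsub
  have hB : ∑ i ∈ hbfin.toFinset, b i = (n : ℝ) := by
    rw [← hsum, finsum_eq_finset_sum_of_support_subset]
    simp
  have hmain : (n : ℝ) * M ^ (α - 1) ≤ ∑ᶠ i, (b i) ^ α := by
    rw [hA, ← hB, Finset.sum_mul]
    exact Finset.sum_le_sum fun i _ => hpt i
  constructor
  · refine le_trans ?_ hmain
    have h1 : (⌊(n : ℝ) / M⌋ : ℝ) ≤ (n : ℝ) / M := Int.floor_le _
    have h2 : (0:ℝ) < M ^ α := Real.rpow_pos_of_pos hM0 α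
    calc (⌊(n : ℝ) / M⌋ : ℝ) * M ^ α ≤ ((n : ℝ) / M) * M ^ α := by gcongr
      _ = (n : ℝ) * M ^ (α - 1) := by
          rw [Real.rpow_sub hM0, Real.rpow_one]; ring
  · refine le_trans ?_ hmain
    have heq : (n : ℝ) * M ^ (α - 1) = C ^ (α - 1) * (n : ℝ) ^ ((1 + α) / 2) := by
      rw [hM, Real.mul_rpow hC.le hsq.le, Real.sqrt_eq_rpow, ← Real.rpow_mul hn0.le]
      have h3 : (n:ℝ) * (n:ℝ) ^ (1/2*(α-1)) = (n:ℝ) ^ ((1+α)/2) := by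
        nth_rewrite 1 [← Real.rpow_one (n:ℝ)]
        rw [← Real.rpow_add hn0]
        congr 1; ring
      rw [← h3]; ring
    rw [heq]
    have : (0:ℝ) ≤ (n : ℝ) ^ ((1 + α) / 2) := Real.rpow_nonneg hn0.le _
    have hCpos : (0:ℝ) < C ^ (α - 1) := Real.rpow_pos_of_pos hC _
    nlinarith
end
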